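/- Let n : [0,∞) → [0,∞) be a non-decreasing function with n(t) = 0 for t near 0, and define N(r) = ∫₀^r n(t)/t dt. If d·N(r) = C·r^d + o(r^d) as r → ∞ for some constants C ≥ 0 and d > 0, then n(r) = C·r^d + o(r^d) as r → ∞. -/

import Mathlib

/-!
Write `N(r) = ∫₀^r n(t)/t dt`. Monotonicity of `n` makes `n(a)` a subgradient of the convex
function `u ↦ N(eᵘ)` at `log a`, i.e. `n(a) log(b/a) ≤ N(b) - N(a)`. Taking `b = e^{s/d} r` gives
`s · n(r)/r^d ≤ e^s F(e^{s/d} r) - F(r)` with `F(r) = d N(r)/r^d → C`, so `n(r)/r^d` lies eventually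
below (for `s > 0`) resp. above (for `s < 0`) a quantity tending to `C (e^s - 1)/s`, which tends to
`C` as `s → 0`.
-/

open Filter Topology MeasureTheory Asymptotics

lemma isLittleO_sub_mul_rpow_iff_tendsto_div {f : ℝ → ℝ} {C d : ℝ} :
    (fun r => f r - C * r ^ d) =o[atTop] (fun r => r ^ d) ↔
      Tendsto (fun r => f r / r ^ d) atTop (𝓝 C) := by
  have hpos : ∀ᶠ r : ℝ in atTop, 0 < r ^ d := by
    filter_upwards [eventually_gt_atTop 0] with r hr using Real.rpow_pos_of_pos hr d
  rw [isLittleO_iff_tendsto' (hpos.mono fun r hr h => absurd h hr.ne')]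
  refine (tendsto_congr' (hpos.mono fun r hr => ?_)).trans tendsto_sub_nhds_zero_iff
  rw [sub_div, mul_div_cancel_right₀ _ hr.ne']

lemma tendsto_of_eventually_le_of_tendsto_family {ι β α : Type*} [TopologicalSpace α]
    [LinearOrder α] [OrderTopology α] {p q : Filter ι} {l : Filter β} {f : β → α}
    {U : ι → β → α} {V : ι → α} {c : α} (hVp : Tendsto V p (𝓝 c)) (hVq : Tendsto V q (𝓝 c))
    (hU : ∀ i, Tendsto (U i) l (𝓝 (V i)))
    (hlow : ∀ᶠ i in p, ∀ᶠ x in l, U i x ≤ f x) (hup : ∀ᶠ i in q, ∀ᶠ x in l, f x ≤ U i x)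
    [p.NeBot] [q.NeBot] : Tendsto f l (𝓝 c) := by
  refine tendsto_order.2 ⟨fun a ha => ?_, fun a ha => ?_⟩
  · obtain ⟨i, hi, hia⟩ := (hlow.and (hVp.eventually (lt_mem_nhds ha))).exists
    filter_upwards [hi, (hU i).eventually (lt_mem_nhds hia)] with x hx hax using hax.trans_le hx
  · obtain ⟨i, hi, hia⟩ := (hup.and (hVq.eventually (gt_mem_nhds ha))).exists
    filter_upwards [hi, (hU i).eventually (gt_mem_nhds hia)] with x hx hxa using hx.trans_lt hxa

lemma intervalIntegrable_div_self_of_monotoneOn {n : ℝ → ℝ} {a b : ℝ} (ha : 0 < a) (hb : 0 < b)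
    (hmono : MonotoneOn n (Set.uIcc a b)) :
    IntervalIntegrable (fun t => n t / t) volume a b := by
  have hinv : ContinuousOn (fun t : ℝ => t⁻¹) (Set.uIcc a b) :=
    continuousOn_inv₀.mono fun t ht => (lt_of_lt_of_le (lt_min ha hb) ht.1).ne'
  simpa only [div_eq_mul_inv] using hmono.intervalIntegrable.mul_continuousOn hinv

lemma mul_log_div_le_integral_div {n : ℝ → ℝ} {a b : ℝ} (ha : 0 < a) (hb : 0 < b)
    (hmono : MonotoneOn n (Set.uIcc a b)) :
    n a * Real.log (b / a) ≤ ∫ t in a..b, n t / t := by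
  have hconst : ∀ x y : ℝ, 0 < x → 0 < y → ∫ t in x..y, n a / t = n a * Real.log (y / x) :=
    fun x y hx hy => by
      simp only [div_eq_mul_inv, intervalIntegral.integral_const_mul, integral_inv_of_pos hx hy]
  have hint : ∀ x y : ℝ, 0 < x → 0 < y → IntervalIntegrable (fun t => n a / t) volume x y :=
    fun x y hx hy => intervalIntegrable_div_self_of_monotoneOn (n := fun _ => n a) hx hy
      monotoneOn_const
  rcases le_total a b with hab | hba
  · rw [← hconst a b ha hb]
    refine intervalIntegral.integral_mono_on hab (hint a b ha hb)
      (intervalIntegrable_div_self_of_monotoneOn ha hb hmono) fun t ht => ?_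
    have ht' : t ∈ Set.uIcc a b := Set.Icc_subset_uIcc ht
    exact div_le_div_of_nonneg_right (hmono Set.left_mem_uIcc ht' ht.1) (ha.trans_le ht.1).le
  · have hmono' : MonotoneOn n (Set.uIcc b a) := Set.uIcc_comm a b ▸ hmono
    have hle : ∫ t in b..a, n t / t ≤ ∫ t in b..a, n a / t := by
      refine intervalIntegral.integral_mono_on hba
        (intervalIntegrable_div_self_of_monotoneOn hb ha hmono') (hint b a hb ha) fun t ht => ?_
      have ht' : t ∈ Set.uIcc b a := Set.Icc_subset_uIcc ht
      exact div_le_div_of_nonneg_right (hmono' ht' Set.right_mem_uIcc ht.2) (hb.trans_le ht.1).le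
    rw [hconst b a hb ha] at hle
    rw [intervalIntegral.integral_symm, ← inv_div a b, Real.log_inv]
    linarith

lemma intervalIntegrable_zero_div_self_of_eq_zero {n : ℝ → ℝ} {ε b : ℝ} (hε : 0 < ε)
    (hzero : ∀ t ∈ Set.Icc (0 : ℝ) ε, n t = 0) (hmono : MonotoneOn n (Set.Ioi 0)) (hb : 0 < b) :
    IntervalIntegrable (fun t => n t / t) volume 0 b := by
  have hnear : IntervalIntegrable (fun t => n t / t) volume 0 ε := by
    refine IntervalIntegrable.congr (f := 0) (fun t ht => ?_) intervalIntegrable_const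
    rw [Set.uIoc_of_le hε.le] at ht
    simp [hzero t (Set.Ioc_subset_Icc_self ht)]
  exact hnear.trans <| intervalIntegrable_div_self_of_monotoneOn hε hb <|
    hmono.mono fun t ht => lt_of_lt_of_le (lt_min hε hb) ht.1

lemma mul_log_div_le_integral_sub_integral {n : ℝ → ℝ} {ε a b : ℝ} (hε : 0 < ε)
    (hzero : ∀ t ∈ Set.Icc (0 : ℝ) ε, n t = 0) (hmono : MonotoneOn n (Set.Ioi 0))
    (ha : 0 < a) (hb : 0 < b) :
    n a * Real.log (b / a) ≤ (∫ t in (0 : ℝ)..b, n t / t) - ∫ t in (0 : ℝ)..a, n t / t := by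
  rw [intervalIntegral.integral_interval_sub_left
    (intervalIntegrable_zero_div_self_of_eq_zero hε hzero hmono hb)
    (intervalIntegrable_zero_div_self_of_eq_zero hε hzero hmono ha)]
  exact mul_log_div_le_integral_div ha hb <|
    hmono.mono fun t ht => lt_of_lt_of_le (lt_min ha hb) ht.1

lemma tendsto_exp_sub_one_div_nhdsNE :
    Tendsto (fun s => (Real.exp s - 1) / s) (𝓝[≠] 0) (𝓝 1) := by
  have := hasDerivAt_iff_tendsto_slope_zero.1 (Real.hasDerivAt_exp 0)
  simpa [div_eq_inv_mul] using this

lemma rpow_exp_div_mul {d : ℝ} (hd : 0 < d) (s : ℝ) {r : ℝ} (hr : 0 ≤ r) :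
    (Real.exp (s / d) * r) ^ d = Real.exp s * r ^ d := by
  rw [Real.mul_rpow (Real.exp_pos _).le hr, ← Real.exp_mul, div_mul_cancel₀ _ hd.ne']

lemma mul_div_rpow_le_of_mul_log_div_le {n N : ℝ → ℝ} {d : ℝ} (hd : 0 < d)
    (hN : ∀ a b, 0 < a → 0 < b → n a * Real.log (b / a) ≤ N b - N a) (s : ℝ) {r : ℝ}
    (hr : 0 < r) :
    s * (n r / r ^ d) ≤
      d * N (Real.exp (s / d) * r) / (Real.exp (s / d) * r) ^ d * Real.exp s - d * N r / r ^ d := by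
  have hrd : 0 < r ^ d := Real.rpow_pos_of_pos hr d
  have hinc := hN r (Real.exp (s / d) * r) hr (by positivity)
  rw [mul_div_cancel_right₀ _ hr.ne', Real.log_exp] at hinc
  have hscale : d * N (Real.exp (s / d) * r) / (Real.exp (s / d) * r) ^ d * Real.exp s =
      d * N (Real.exp (s / d) * r) / r ^ d := by
    rw [rpow_exp_div_mul hd s hr.le]
    field_simp
  rw [hscale, ← sub_div, mul_div_assoc', div_le_div_iff_of_pos_right hrd]
  calc s * n r = d * (n r * (s / d)) := by field_simp
    _ ≤ _ := by linarith [mul_le_mul_of_nonneg_left hinc hd.le]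

lemma tendsto_div_rpow_of_mul_log_div_le {n N : ℝ → ℝ} {C d : ℝ} (hd : 0 < d)
    (hN : ∀ a b, 0 < a → 0 < b → n a * Real.log (b / a) ≤ N b - N a)
    (hlim : Tendsto (fun r => d * N r / r ^ d) atTop (𝓝 C)) :
    Tendsto (fun r => n r / r ^ d) atTop (𝓝 C) := by
  set F : ℝ → ℝ := fun r => d * N r / r ^ d
  set U : ℝ → ℝ → ℝ := fun s r => (F (Real.exp (s / d) * r) * Real.exp s - F r) / s
  have hV : Tendsto (fun s => C * ((Real.exp s - 1) / s)) (𝓝[≠] 0) (𝓝 C) := by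
    simpa using tendsto_exp_sub_one_div_nhdsNE.const_mul C
  have hU : ∀ s, Tendsto (U s) atTop (𝓝 (C * ((Real.exp s - 1) / s))) := fun s => by
    have hF := hlim.comp (tendsto_id.const_mul_atTop (Real.exp_pos (s / d)))
    have hlimU := ((hF.mul_const (Real.exp s)).sub hlim).div_const s
    rwa [show (C * Real.exp s - C) / s = C * ((Real.exp s - 1) / s) by ring] at hlimU
  have hbound : ∀ s ≠ 0, ∀ᶠ r in atTop, s * (n r / r ^ d) ≤ s * U s r := fun s hs => by
    filter_upwards [eventually_gt_atTop 0] with r hr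
    rw [mul_div_cancel₀ _ hs]
    exact mul_div_rpow_le_of_mul_log_div_le hd hN s hr
  refine tendsto_of_eventually_le_of_tendsto_family (hV.mono_left (nhdsLT_le_nhdsNE 0))
    (hV.mono_left (nhdsGT_le_nhdsNE 0)) hU ?_ ?_
  · filter_upwards [self_mem_nhdsWithin] with s (hs : s < 0)
    filter_upwards [hbound s hs.ne] with r hr using (mul_le_mul_left_of_neg hs).1 hr
  · filter_upwards [self_mem_nhdsWithin] with s (hs : 0 < s)
    filter_upwards [hbound s hs.ne'] with r hr using le_of_mul_le_mul_left hr hs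

theorem stmt2_general (n : ℝ → ℝ) (C d : ℝ) (hd : 0 < d)
    (hmono : MonotoneOn n (Set.Ici 0))
    (hzero : ∃ ε > 0, ∀ t ∈ Set.Icc (0:ℝ) ε, n t = 0)
    (hN : (fun r => d * (∫ t in (0:ℝ)..r, n t / t) - C * r ^ d) =o[atTop] fun r => r ^ d) :
    (fun r => n r - C * r ^ d) =o[atTop] fun r => r ^ d := by
  obtain ⟨ε, hε, hzero⟩ := hzero
  rw [isLittleO_sub_mul_rpow_iff_tendsto_div] at hN ⊢
  exact tendsto_div_rpow_of_mul_log_div_le hd (fun a b ha hb =>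
    mul_log_div_le_integral_sub_integral hε hzero (hmono.mono Set.Ioi_subset_Ici_self) ha hb) hN

/-- Tauberian direction: if `n` is non-decreasing, nonnegative, vanishes near `0`, and
`d·N(r) = C r^d + o(r^d)` where `N(r) = ∫₀^r n(t)/t dt`, then `n(r) = C r^d + o(r^d)`. -/
theorem stmt2 (n : ℝ → ℝ) (C d : ℝ) (hC : 0 ≤ C) (hd : 0 < d)
    (hpos : ∀ t, 0 ≤ n t) (hmono : MonotoneOn n (Set.Ici 0))
    (hzero : ∃ ε > 0, ∀ t ∈ Set.Icc (0:ℝ) ε, n t = 0)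
    (hN : (fun r => d * (∫ t in (0:ℝ)..r, n t / t) - C * r ^ d) =o[atTop] fun r => r ^ d) :
    (fun r => n r - C * r ^ d) =o[atTop] fun r => r ^ d :=
  stmt2_general n C d hd hmono hzero hN
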